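/- Let d ≥ 1, let θ₁, θ₂, θ₃ > 0, and let e₁, e₂, e₃ be independent random vectors in ℝ^d, where for each p ∈ {1,2,3} the d coordinates of e_p are independent, each distributed as a real Gaussian with mean 0 and variance 1/(2θ_p). Writing δ_{pq} = E[‖e_p − e_q‖²], one has θ₁ = d / (δ₁₂ + δ₁₃ − δ₂₃). (This is the identifiability formula θ_i^{jk}(x) = d/(δ_{ij}(x) + δ_{ik}(x) − δ_{jk}(x)) underlying the Smoothie estimator: the quality score of each model is recovered exactly from the expected pairwise squared distances between model error vectors.) -/

import Mathlib

open MeasureTheory ProbabilityTheory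

open Real MeasureTheory ProbabilityTheory Filter
open scoped NNReal ENNReal

section Aux

/-- second moment Gaussian integral -/
lemma aux_integral_sq_exp {b : ℝ} (hb : 0 < b) :
    ∫ x : ℝ, x ^ 2 * Real.exp (-b * x ^ 2) = Real.sqrt (π / b) / (2 * b) := by
  have hint2 : Integrable (fun x : ℝ => x ^ 2 * Real.exp (-b * x ^ 2)) := by
    have := integrable_rpow_mul_exp_neg_mul_sq hb (s := 2) (by norm_num)
    simpa [Real.rpow_two] using this
  have hint1 : Integrable (fun x : ℝ => Real.exp (-b * x ^ 2)) := integrable_exp_neg_mul_sq hb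
  have hderiv : ∀ x : ℝ, HasDerivAt (fun x : ℝ => x * Real.exp (-b * x ^ 2))
      (Real.exp (-b * x ^ 2) - 2 * b * (x ^ 2 * Real.exp (-b * x ^ 2))) x := by
    intro x
    have hu : HasDerivAt (fun x : ℝ => -b * x ^ 2) (-b * (2 * x)) x :=
      ((hasDerivAt_pow 2 x).const_mul (-b)).congr_deriv (by ring)
    have := (hasDerivAt_id' (x := x)).mul hu.exp
    exact this.congr_deriv (by ring)
  have h0 : ∫ x : ℝ, (Real.exp (-b * x ^ 2) - 2 * b * (x ^ 2 * Real.exp (-b * x ^ 2))) = 0 :=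
    integral_eq_zero_of_hasDerivAt_of_integrable hderiv
      (hint1.sub (hint2.const_mul (2 * b))) (integrable_mul_exp_neg_mul_sq hb)
  rw [integral_sub hint1 (hint2.const_mul (2 * b)), integral_const_mul,
    integral_gaussian] at h0
  have hb' : (2 : ℝ) * b ≠ 0 := by positivity
  field_simp at h0 ⊢
  linarith

end Aux

section Moments

lemma aux_withDensity (v : ℝ≥0) (hv : v ≠ 0) :
    gaussianReal 0 v
      = (volume : Measure ℝ).withDensity
        (fun x => ((Real.toNNReal (gaussianPDFReal 0 v x) : ℝ≥0) : ℝ≥0∞)) := by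
  rw [gaussianReal_of_var_ne_zero 0 hv]
  rfl

lemma aux_pdf_meas (v : ℝ≥0) :
    Measurable (fun x => Real.toNNReal (gaussianPDFReal 0 v x)) :=
  (measurable_gaussianPDFReal 0 v).real_toNNReal

lemma aux_pdf_smul (v : ℝ≥0) (g : ℝ → ℝ) (x : ℝ) :
    (Real.toNNReal (gaussianPDFReal 0 v x)) • g x = gaussianPDFReal 0 v x * g x := by
  rw [NNReal.smul_def, smul_eq_mul, Real.coe_toNNReal _ (gaussianPDFReal_nonneg 0 v x)]

lemma aux_b_pos (v : ℝ≥0) (hv : v ≠ 0) : 0 < ((2 : ℝ) * v)⁻¹ := by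
  have : (0 : ℝ) < v := by positivity
  positivity

lemma aux_pdf_eq (v : ℝ≥0) (x : ℝ) :
    gaussianPDFReal 0 v x = (Real.sqrt (2 * π * v))⁻¹ * Real.exp (-(2 * v : ℝ)⁻¹ * x ^ 2) := by
  rw [gaussianPDFReal]
  congr 1
  rw [sub_zero]
  congr 1
  field_simp

lemma integrable_sq_gaussianReal (v : ℝ≥0) :
    Integrable (fun x : ℝ => x ^ 2) (gaussianReal 0 v) := by
  by_cases hv : v = 0
  · rw [hv, gaussianReal_zero_var]
    refine (integrable_const ((0:ℝ) ^ 2)).congr ?_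
    rw [Filter.EventuallyEq, ae_dirac_eq]
    exact Filter.eventually_pure.mpr rfl
  rw [aux_withDensity v hv,
    integrable_withDensity_iff_integrable_smul (aux_pdf_meas v)]
  have h : Integrable (fun x : ℝ => (Real.sqrt (2 * π * v))⁻¹ *
      (x ^ 2 * Real.exp (-(2 * v : ℝ)⁻¹ * x ^ 2))) := by
    refine Integrable.const_mul ?_ _
    have := integrable_rpow_mul_exp_neg_mul_sq (aux_b_pos v hv) (s := 2) (by norm_num)
    simpa [Real.rpow_two] using this
  have hfun : (fun x : ℝ => (Real.toNNReal (gaussianPDFReal 0 v x)) • (x ^ 2))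
      = (fun x : ℝ => (Real.sqrt (2 * π * v))⁻¹ *
        (x ^ 2 * Real.exp (-(2 * v : ℝ)⁻¹ * x ^ 2))) := by
    funext x
    rw [aux_pdf_smul v (fun y => y ^ 2) x, aux_pdf_eq]
    ring
  rw [hfun]
  exact h

lemma integrable_id_gaussianReal (v : ℝ≥0) :
    Integrable (fun x : ℝ => x) (gaussianReal 0 v) := by
  by_cases hv : v = 0
  · rw [hv, gaussianReal_zero_var]
    refine (integrable_const (0:ℝ)).congr ?_
    rw [Filter.EventuallyEq, ae_dirac_eq]
    exact Filter.eventually_pure.mpr rfl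
  rw [aux_withDensity v hv,
    integrable_withDensity_iff_integrable_smul (aux_pdf_meas v)]
  have h : Integrable (fun x : ℝ => (Real.sqrt (2 * π * v))⁻¹ *
      (x * Real.exp (-(2 * v : ℝ)⁻¹ * x ^ 2))) :=
    (integrable_mul_exp_neg_mul_sq (aux_b_pos v hv)).const_mul _
  have hfun : (fun x : ℝ => (Real.toNNReal (gaussianPDFReal 0 v x)) • x)
      = (fun x : ℝ => (Real.sqrt (2 * π * v))⁻¹ *
        (x * Real.exp (-(2 * v : ℝ)⁻¹ * x ^ 2))) := by
    funext x
    rw [aux_pdf_smul v (fun y => y) x, aux_pdf_eq]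
    ring
  rw [hfun]
  exact h

lemma integral_sq_gaussianReal (v : ℝ≥0) :
    ∫ x, x ^ 2 ∂(gaussianReal 0 v) = v := by
  by_cases hv : v = 0
  · rw [hv, gaussianReal_zero_var, integral_dirac]
    simp
  have hb : 0 < ((2 : ℝ) * v)⁻¹ := aux_b_pos v hv
  have hvpos : (0 : ℝ) < v := by positivity
  rw [aux_withDensity v hv, integral_withDensity_eq_integral_smul (aux_pdf_meas v)]
  have heq : ∀ x : ℝ, (Real.toNNReal (gaussianPDFReal 0 v x)) • (x ^ 2)
      = (Real.sqrt (2 * π * v))⁻¹ * (x ^ 2 * Real.exp (-(2 * v : ℝ)⁻¹ * x ^ 2)) := by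
    intro x
    rw [aux_pdf_smul v (fun x => x ^ 2), aux_pdf_eq]
    ring
  rw [integral_congr_ae (Filter.Eventually.of_forall heq), integral_const_mul,
    aux_integral_sq_exp hb]
  have h1 : π / ((2 : ℝ) * v)⁻¹ = 2 * π * v := by field_simp
  have h2 : (2 : ℝ) * ((2 : ℝ) * v)⁻¹ = (v : ℝ)⁻¹ := by field_simp
  rw [h1, h2]
  have hs : Real.sqrt (2 * π * v) ≠ 0 := by positivity
  field_simp

lemma integral_id_gaussianReal (v : ℝ≥0) :
    ∫ x, x ∂(gaussianReal 0 v) = 0 := by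
  have hmap : (gaussianReal 0 v).map ((-1 : ℝ) * ·) = gaussianReal 0 v := by
    rw [gaussianReal_map_const_mul (μ := 0) (v := v) (-1)]
    congr 1
    · ring
    · apply NNReal.coe_injective
      push_cast
      norm_num
  have hI : ∫ x, x ∂(gaussianReal 0 v) = ∫ x, x ∂((gaussianReal 0 v).map ((-1 : ℝ) * ·)) := by
    rw [hmap]
  rw [integral_map (φ := fun x : ℝ => (-1 : ℝ) * x) (f := fun x : ℝ => x) (by fun_prop)
    (by rw [hmap]; exact aestronglyMeasurable_id)] at hI
  simp only [neg_one_mul] at hI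
  rw [integral_neg] at hI
  linarith

end Moments

section RV

variable {Ω : Type*} [MeasurableSpace Ω] {μ : Measure Ω} [IsProbabilityMeasure μ]

lemma rv_integrable_sq {X : Ω → ℝ} (hX : Measurable X) {v : ℝ≥0}
    (hlaw : Measure.map X μ = gaussianReal 0 v) :
    Integrable (fun ω => X ω ^ 2) μ := by
  have h := (integrable_map_measure (f := X) (g := fun x : ℝ => x ^ 2)
    (by fun_prop) hX.aemeasurable).mp
    (by rw [hlaw]; exact integrable_sq_gaussianReal v)
  exact h

lemma rv_integrable {X : Ω → ℝ} (hX : Measurable X) {v : ℝ≥0}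
    (hlaw : Measure.map X μ = gaussianReal 0 v) :
    Integrable X μ := by
  have h := (integrable_map_measure (f := X) (g := fun x : ℝ => x)
    (by exact aestronglyMeasurable_id) hX.aemeasurable).mp
    (by rw [hlaw]; exact integrable_id_gaussianReal v)
  exact h

lemma rv_integral_sq {X : Ω → ℝ} (hX : Measurable X) {v : ℝ≥0}
    (hlaw : Measure.map X μ = gaussianReal 0 v) :
    ∫ ω, X ω ^ 2 ∂μ = v := by
  have h := integral_map (μ := μ) (φ := X) (f := fun x : ℝ => x ^ 2) hX.aemeasurable (by fun_prop)
  rw [← h, hlaw, integral_sq_gaussianReal]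

lemma rv_integral {X : Ω → ℝ} (hX : Measurable X) {v : ℝ≥0}
    (hlaw : Measure.map X μ = gaussianReal 0 v) :
    ∫ ω, X ω ∂μ = 0 := by
  have h := integral_map (μ := μ) (φ := X) (f := fun x : ℝ => x) hX.aemeasurable
    (by rw [hlaw]; exact aestronglyMeasurable_id)
  rw [← h, hlaw, _root_.integral_id_gaussianReal]

lemma pair_integrable {X Y : Ω → ℝ} (hX : Measurable X) (hY : Measurable Y)
    (hind : IndepFun X Y μ) {vX vY : ℝ≥0}
    (hlX : Measure.map X μ = gaussianReal 0 vX) (hlY : Measure.map Y μ = gaussianReal 0 vY) :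
    Integrable (fun ω => (X ω - Y ω) ^ 2) μ := by
  have iX2 := rv_integrable_sq hX hlX
  have iY2 := rv_integrable_sq hY hlY
  have iXY : Integrable (X * Y) μ :=
    hind.integrable_mul (rv_integrable hX hlX) (rv_integrable hY hlY)
  have expand : (fun ω => (X ω - Y ω) ^ 2)
      = fun ω => X ω ^ 2 - 2 * (X * Y) ω + Y ω ^ 2 := by
    funext ω; simp only [Pi.mul_apply]; ring
  rw [expand]
  exact (iX2.sub (iXY.const_mul 2)).add iY2

lemma pair_integral {X Y : Ω → ℝ} (hX : Measurable X) (hY : Measurable Y)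
    (hind : IndepFun X Y μ) {vX vY : ℝ≥0}
    (hlX : Measure.map X μ = gaussianReal 0 vX) (hlY : Measure.map Y μ = gaussianReal 0 vY) :
    ∫ ω, (X ω - Y ω) ^ 2 ∂μ = vX + vY := by
  have iX2 := rv_integrable_sq hX hlX
  have iY2 := rv_integrable_sq hY hlY
  have iXY : Integrable (X * Y) μ :=
    hind.integrable_mul (rv_integrable hX hlX) (rv_integrable hY hlY)
  have expand : (fun ω => (X ω - Y ω) ^ 2)
      = fun ω => X ω ^ 2 - 2 * (X * Y) ω + Y ω ^ 2 := by
    funext ω; simp only [Pi.mul_apply]; ring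
  rw [expand]
  have h1 := integral_add (μ := μ) (f := fun ω => X ω ^ 2 - 2 * (X * Y) ω)
    (g := fun ω => Y ω ^ 2) (iX2.sub (iXY.const_mul 2)) iY2
  have h2 := integral_sub (μ := μ) (f := fun ω => X ω ^ 2)
    (g := fun ω => 2 * (X * Y) ω) iX2 (iXY.const_mul 2)
  rw [h1, h2, integral_const_mul,
    hind.integral_mul_eq_mul_integral hX.aestronglyMeasurable hY.aestronglyMeasurable,
    rv_integral hX hlX, rv_integral hY hlY, rv_integral_sq hX hlX, rv_integral_sq hY hlY]
  ring

end RV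


/-- identifiability formula `θ_i^{jk} = d/(δ_{ij} + δ_{ik} − δ_{jk})`.
Let `e₁, e₂, e₃` be independent random vectors in `ℝ^d` (`d ≥ 1`), each with `d`
independent coordinates distributed as a centered Gaussian of variance `1/(2θ_p)`
(`θ_p > 0`). Writing `δ_{pq} = E[‖e_p − e_q‖²]`, one has
`θ₁ = d / (δ₁₂ + δ₁₃ − δ₂₃)`. (Joint independence of all `3·d` coordinates encodes both
the independence of the three vectors and of each vector's coordinates.) -/
theorem quality_score_identifiable
    {Ω : Type*} [MeasurableSpace Ω] {μ : Measure Ω} [IsProbabilityMeasure μ]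
    {d : ℕ} (hd : 1 ≤ d) (θ : Fin 3 → ℝ) (hθ : ∀ p, 0 < θ p)
    (e : Fin 3 → Ω → EuclideanSpace ℝ (Fin d))
    (hmeas : ∀ p, Measurable (e p))
    (hindep : iIndepFun
      (fun pk : Fin 3 × Fin d => fun ω => e pk.1 ω pk.2) μ)
    (hdist : ∀ p, ∀ k : Fin d,
      Measure.map (fun ω => e p ω k) μ = gaussianReal 0 (Real.toNNReal (1 / (2 * θ p)))) :
    θ 0 = d / ((∫ ω, ‖e 0 ω - e 1 ω‖ ^ 2 ∂μ) + (∫ ω, ‖e 0 ω - e 2 ω‖ ^ 2 ∂μ)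
      - ∫ ω, ‖e 1 ω - e 2 ω‖ ^ 2 ∂μ) := by
  have hvc : ∀ p, ((Real.toNNReal (1 / (2 * θ p))) : ℝ) = 1 / (2 * θ p) := fun p =>
    Real.coe_toNNReal _ (by have := hθ p; positivity)
  have hXmeas : ∀ p k, Measurable (fun ω => e p ω k) := fun p k =>
    (EuclideanSpace.proj k).continuous.measurable.comp (hmeas p)
  have hδ : ∀ p q, p ≠ q → ∫ ω, ‖e p ω - e q ω‖ ^ 2 ∂μ
      = d * (1 / (2 * θ p) + 1 / (2 * θ q)) := by
    intro p q hpq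
    have hnorm : ∀ ω, ‖e p ω - e q ω‖ ^ 2 = ∑ k : Fin d, (e p ω k - e q ω k) ^ 2 := by
      intro ω
      rw [EuclideanSpace.norm_eq, Real.sq_sqrt (Finset.sum_nonneg fun k _ => by positivity)]
      refine Finset.sum_congr rfl fun k _ => ?_
      simp [Real.norm_eq_abs, sq_abs]
    have hindpq : ∀ k : Fin d, IndepFun (fun ω => e p ω k) (fun ω => e q ω k) μ := fun k =>
      hindep.indepFun (i := (p, k)) (j := (q, k)) (fun h => hpq (congrArg Prod.fst h))
    simp_rw [hnorm]
    rw [integral_finset_sum _ (fun k _ =>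
      pair_integrable (hXmeas p k) (hXmeas q k) (hindpq k) (hdist p k) (hdist q k))]
    have hsum : ∀ k ∈ Finset.univ, ∫ ω, (e p ω k - e q ω k) ^ 2 ∂μ
        = (1 / (2 * θ p) + 1 / (2 * θ q)) := by
      intro k _
      rw [pair_integral (hXmeas p k) (hXmeas q k) (hindpq k) (hdist p k) (hdist q k),
        hvc p, hvc q]
    rw [Finset.sum_congr rfl hsum, Finset.sum_const, Finset.card_univ, Fintype.card_fin,
      nsmul_eq_mul]
  rw [hδ 0 1 (by decide), hδ 0 2 (by decide), hδ 1 2 (by decide)]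
  have hθ0 := hθ 0
  have hθ1 := hθ 1
  have hθ2 := hθ 2
  have hdpos : (0 : ℝ) < d := by exact_mod_cast Nat.lt_of_lt_of_le Nat.zero_lt_one hd
  have key : (d : ℝ) * (1 / (2 * θ 0) + 1 / (2 * θ 1))
      + d * (1 / (2 * θ 0) + 1 / (2 * θ 2)) - d * (1 / (2 * θ 1) + 1 / (2 * θ 2))
      = d / θ 0 := by
    field_simp
    ring
  rw [key]
  rw [div_div_eq_mul_div, mul_comm, mul_div_assoc, div_self hdpos.ne', mul_one]
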